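/- arXiv:0809.1307 — 5 statements merged into one kernel-verified Lean document; each statement's English description precedes it below -/
import Mathlib

section
/- Let R be a commutative integral domain, let ⋆ be a semistar operation of finite type on R, and let I be a quasi-⋆-ideal of R. Then √I^⋆ ∩ R = √I; that is, the radical √I is also a quasi-⋆-ideal of R. -/
open Pointwise

/-- A semistar operation on an integral domain `R` with quotient field `K`:
a map `E ↦ E^⋆` on the nonzero `R`-submodules of `K` satisfying the usual axioms.
(The map is defined on all submodules, but the axioms are only required for the
nonzero ones.) -/
structure SemistarOperation (R K : Type*) [CommRing R] [IsDomain R] [Field K]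
    [Algebra R K] [IsFractionRing R K] where
  star : Submodule R K → Submodule R K
  smul_star : ∀ (x : K), x ≠ 0 → ∀ E : Submodule R K, E ≠ ⊥ → star (x • E) = x • star E
  mono : ∀ E F : Submodule R K, E ≠ ⊥ → E ≤ F → star E ≤ star F
  le_star : ∀ E : Submodule R K, E ≠ ⊥ → E ≤ star E
  star_star : ∀ E : Submodule R K, E ≠ ⊥ → star (star E) = star E

namespace SemistarOperation

variable {R K : Type*} [CommRing R] [IsDomain R] [Field K] [Algebra R K] [IsFractionRing R K]
variable (s : SemistarOperation R K)

/-- `⋆` is of finite type: for every nonzero submodule `E`, the module `E^⋆` is the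
union of the `F^⋆` over the nonzero finitely generated submodules `F ⊆ E`. -/
def FiniteType : Prop :=
  ∀ E : Submodule R K, E ≠ ⊥ → ∀ x : K,
    x ∈ s.star E ↔ ∃ F : Submodule R K, F.FG ∧ F ≠ ⊥ ∧ F ≤ E ∧ x ∈ s.star F

/-- `I^⋆`, for an ideal `I` of `R` (viewing `I` as a submodule of `K`). -/
def idealStar (I : Ideal R) : Submodule R K :=
  s.star (Submodule.map (Algebra.linearMap R K) I)

/-- `I^⋆ ∩ R`, as an ideal of `R`. -/
def contract (I : Ideal R) : Ideal R :=
  Submodule.comap (Algebra.linearMap R K) (s.idealStar I)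

/-- A (nonzero) ideal `I` of `R` is a quasi-`⋆`-ideal if `I^⋆ ∩ R = I`. -/
def IsQuasiStarIdeal (I : Ideal R) : Prop :=
  I ≠ ⊥ ∧ s.contract I = I

/-- A nonzero ideal `L` of `R` is `⋆`-finite if `L^⋆ = F^⋆` for some nonzero
finitely generated ideal `F` of `R`. -/
def IsStarFinite (L : Ideal R) : Prop :=
  L ≠ ⊥ ∧ ∃ F : Ideal R, F.FG ∧ F ≠ ⊥ ∧ s.idealStar F = s.idealStar L

/-- `⋆` is stable: it distributes over finite intersections (of nonzero submodules
with nonzero intersection). -/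
def Stable : Prop :=
  ∀ E F : Submodule R K, E ≠ ⊥ → F ≠ ⊥ → E ⊓ F ≠ ⊥ →
    s.star (E ⊓ F) = s.star E ⊓ s.star F

/-- `⋆-Min(I)`: the set of quasi-`⋆`-prime ideals of `R` minimal over `I`. -/
def starMin (I : Ideal R) : Set (Ideal R) :=
  {P | Minimal (fun Q : Ideal R => Q.IsPrime ∧ s.IsQuasiStarIdeal Q ∧ I ≤ Q) P}

/-- A nonzero ideal `I` of `R` is a `⋆`-SFT-ideal if there are a finitely generated
ideal `J ⊆ I` and a positive integer `k` with `a ^ k ∈ J^⋆` for every `a ∈ I^⋆`. -/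
def IsSFT (I : Ideal R) : Prop :=
  I ≠ ⊥ ∧ ∃ J : Ideal R, J.FG ∧ J ≤ I ∧ ∃ k : ℕ, 0 < k ∧
    ∀ a ∈ s.idealStar I, a ^ k ∈ s.idealStar J

/-- `R` is a `⋆`-SFT-ring if every nonzero ideal of `R` is a `⋆`-SFT-ideal. -/
def IsSFTRing : Prop := ∀ I : Ideal R, I ≠ ⊥ → s.IsSFT I

end SemistarOperation

/-!
For `x ∈ √I^⋆ ∩ R`, finite type puts `x` in `J^⋆` for some finitely generated `J ⊆ √I`, and
then `J^n ⊆ I` for some `n`. As `E^⋆ F^⋆ ⊆ (EF)^⋆`, this gives `x^n ∈ (J^n)^⋆ ⊆ I^⋆`, hence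
`x^n ∈ I^⋆ ∩ R = I`.
-/

namespace SemistarOperation

variable {R K : Type*} [CommRing R] [IsDomain R] [Field K] [Algebra R K] [IsFractionRing R K]
  (s : SemistarOperation R K)

lemma star_ne_bot {E : Submodule R K} (hE : E ≠ ⊥) : s.star E ≠ ⊥ :=
  ne_bot_of_le_ne_bot hE (s.le_star E hE)

lemma star_mul_le {E F : Submodule R K} (hE : E ≠ ⊥) :
    s.star E * F ≤ s.star (E * F) := by
  refine Submodule.mul_le.2 fun m hm f hf => ?_
  rcases eq_or_ne f 0 with rfl | hf0
  · simp
  have hfE : f • E = Submodule.span R {f} * E := Submodule.span_singleton_mul.symm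
  have hfE_ne : f • E ≠ ⊥ :=
    hfE ▸ mul_ne_zero (by simpa using hf0) hE
  have hfE_le : f • E ≤ E * F := by
    rw [hfE, mul_comm E]
    exact mul_le_mul' ((Submodule.span_singleton_le_iff_mem _ _).2 hf) le_rfl
  have hmf : m * f ∈ s.star (f • E) := by
    rw [s.smul_star f hf0 E hE, mul_comm]
    exact Submodule.smul_mem_pointwise_smul m f _ hm
  exact s.mono _ _ hfE_ne hfE_le hmf

lemma star_mul_star_le {E F : Submodule R K} (hE : E ≠ ⊥) (hF : F ≠ ⊥) :
    s.star E * s.star F ≤ s.star (E * F) :=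
  calc s.star E * s.star F ≤ s.star (s.star E * F) := by
        rw [mul_comm, mul_comm (s.star E)]
        exact s.star_mul_le hF
    _ ≤ s.star (s.star (E * F)) :=
        s.mono _ _ (mul_ne_zero (s.star_ne_bot hE) hF) (s.star_mul_le hE)
    _ = s.star (E * F) := s.star_star _ (mul_ne_zero hE hF)

lemma star_pow_le {E : Submodule R K} (hE : E ≠ ⊥) (n : ℕ) : s.star E ^ n ≤ s.star (E ^ n) := by
  induction n with
  | zero => exact s.le_star 1 one_ne_zero
  | succ n ih =>
    rw [pow_succ, pow_succ]
    exact (mul_le_mul' ih le_rfl).trans (s.star_mul_star_le (pow_ne_zero n hE) hE)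

omit [IsDomain R] in
lemma map_ne_bot {J : Ideal R} (hJ : J ≠ ⊥) : Submodule.map (Algebra.linearMap R K) J ≠ ⊥ := by
  simpa using (Submodule.map_injective_of_injective
    (f := Algebra.linearMap R K) (IsFractionRing.injective R K)).ne hJ

lemma le_contract {J : Ideal R} (hJ : J ≠ ⊥) : J ≤ s.contract J :=
  fun _ hx => s.le_star _ (map_ne_bot hJ) (Submodule.mem_map_of_mem hx)

lemma idealStar_mono {J L : Ideal R} (hJ : J ≠ ⊥) (h : J ≤ L) : s.idealStar J ≤ s.idealStar L :=
  s.mono _ _ (map_ne_bot hJ) (Submodule.map_mono h)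

lemma idealStar_pow_le {J : Ideal R} (hJ : J ≠ ⊥) (n : ℕ) :
    s.idealStar J ^ n ≤ s.idealStar (J ^ n) := by
  have hmap_pow : Submodule.map (Algebra.linearMap R K) (J ^ n) =
      Submodule.map (Algebra.linearMap R K) J ^ n := Submodule.map_pow J (Algebra.ofId R K) n
  rw [idealStar, idealStar, hmap_pow]
  exact s.star_pow_le (map_ne_bot hJ) n

lemma FiniteType.exists_fg_of_mem_idealStar {s : SemistarOperation R K} (hs : s.FiniteType)
    {L : Ideal R} (hL : L ≠ ⊥) {x : K} (hx : x ∈ s.idealStar L) :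
    ∃ J : Ideal R, J.FG ∧ J ≠ ⊥ ∧ J ≤ L ∧ x ∈ s.idealStar J := by
  have hinj : Function.Injective (Algebra.linearMap R K) :=
    IsFractionRing.injective R K
  obtain ⟨F, hFG, hF, hFL, hxF⟩ := (hs _ (map_ne_bot hL) x).1 hx
  have hmap : (F.comap (Algebra.linearMap R K)).map (Algebra.linearMap R K) = F :=
    Submodule.map_comap_eq_of_le (hFL.trans LinearMap.map_le_range)
  refine ⟨F.comap (Algebra.linearMap R K), Submodule.fg_of_fg_map_injective _ hinj (by rwa [hmap]),
    fun h => hF (by rw [← hmap, h, Submodule.map_bot]), ?_, by rwa [idealStar, hmap]⟩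
  exact (Submodule.comap_mono hFL).trans (Submodule.comap_map_eq_of_injective hinj L).le

lemma contract_radical_le_radical_contract (hs : s.FiniteType) {L : Ideal R} (hL : L ≠ ⊥) :
    s.contract L.radical ≤ (s.contract L).radical := by
  intro x hx
  obtain ⟨J, hJfg, hJ, hJL, hxJ⟩ :=
    hs.exists_fg_of_mem_idealStar (ne_bot_of_le_ne_bot hL L.le_radical) hx
  obtain ⟨n, hn⟩ := Ideal.exists_pow_le_of_le_radical_of_fg hJL hJfg
  refine ⟨n, ?_⟩
  change algebraMap R K (x ^ n) ∈ s.idealStar L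
  rw [map_pow]
  exact s.idealStar_mono (pow_ne_zero n hJ) hn
    (s.idealStar_pow_le hJ n (Submodule.pow_mem_pow _ hxJ n))

end SemistarOperation

/-- Let `⋆` be a semistar operation of finite type on the integral domain `R` and
let `I` be a quasi-`⋆`-ideal of `R`.  Then `√I^⋆ ∩ R = √I`, i.e. `√I` is also a
quasi-`⋆`-ideal of `R`. -/
theorem radical_contract_eq_radical {R K : Type*} [CommRing R] [IsDomain R] [Field K]
    [Algebra R K] [IsFractionRing R K] (s : SemistarOperation R K) (hs : s.FiniteType)
    (I : Ideal R) (hI : s.IsQuasiStarIdeal I) :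
    s.contract I.radical = I.radical := by
  obtain ⟨hI_ne, hI_contract⟩ := hI
  refine le_antisymm ?_ (s.le_contract (ne_bot_of_le_ne_bot hI_ne I.le_radical))
  simpa only [hI_contract] using s.contract_radical_le_radical_contract hs hI_ne
end

section
/- Let R be a commutative integral domain and let I be a proper ideal of R. If each prime ideal of R minimal over I is the radical of a finitely generated ideal, then I has only finitely many minimal primes. -/
/-!
Suppose `I` had infinitely many minimal primes and take a non-principal ultrafilter `U` on them.
The elements lying in `U`-almost all of these primes form a prime ideal `Q ⊇ I`, so `Q` contains
a minimal prime `P = √F` of `I` with `F` finitely generated. Each of the finitely many generators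
of `F` lies in `U`-almost all of the primes, hence so does `F`, and therefore `P`. By minimality
`U`-almost all of the primes are equal to `P`, so `U` is principal after all.
-/

namespace Ultrafilter

variable {ι R : Type*} [CommSemiring R] (U : Ultrafilter ι) (p : ι → Ideal R)

def limIdeal : Ideal R where
  carrier := {r | ∀ᶠ i in U, r ∈ p i}
  zero_mem' := Filter.Eventually.of_forall fun i => (p i).zero_mem
  add_mem' ha hb := (ha.and hb).mono fun i h => (p i).add_mem h.1 h.2
  smul_mem' c _ hr := hr.mono fun i h => (p i).mul_mem_left c h

variable {U p}

@[simp]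
lemma mem_limIdeal {r : R} : r ∈ U.limIdeal p ↔ ∀ᶠ i in U, r ∈ p i := Iff.rfl

lemma le_limIdeal {I : Ideal R} (h : ∀ᶠ i in U, I ≤ p i) : I ≤ U.limIdeal p :=
  fun _ hr => h.mono fun _ hi => hi hr

lemma isPrime_limIdeal (hp : ∀ i, (p i).IsPrime) : (U.limIdeal p).IsPrime where
  ne_top' h := by
    obtain ⟨i, hi⟩ := (mem_limIdeal.mp ((U.limIdeal p).eq_top_iff_one.mp h)).exists
    exact (hp i).ne_top ((p i).eq_top_iff_one.mpr hi)
  mem_or_mem' hab := eventually_or.mp (hab.mono fun i h => (hp i).mem_or_mem h)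

lemma eventually_le_of_fg_le_limIdeal {F : Ideal R} (hF : F.FG) (h : F ≤ U.limIdeal p) :
    ∀ᶠ i in U, F ≤ p i := by
  obtain ⟨T, rfl⟩ := hF
  simp only [Ideal.span_le]
  exact (Filter.eventually_all_finset T).mpr fun f hf => h (Ideal.subset_span hf)

lemma eventually_radical_le_of_fg_of_radical_le_limIdeal (hp : ∀ i, (p i).IsRadical)
    {F : Ideal R} (hF : F.FG) (h : F.radical ≤ U.limIdeal p) : ∀ᶠ i in U, F.radical ≤ p i :=
  (eventually_le_of_fg_le_limIdeal hF (F.le_radical.trans h)).mono fun i hi =>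
    (hp i).radical_le_iff.mpr hi

end Ultrafilter

theorem minimalPrimes_finite_of_forall_radical_fg_general {R : Type*} [CommRing R]
    (I : Ideal R)
    (h : ∀ P ∈ I.minimalPrimes, ∃ F : Ideal R, F.FG ∧ P = F.radical) :
    I.minimalPrimes.Finite := by
  by_contra hinf
  have : Infinite I.minimalPrimes := Set.infinite_coe_iff.mpr hinf
  let U := Filter.hyperfilter I.minimalPrimes
  let Q := U.limIdeal ((↑) : I.minimalPrimes → Ideal R)
  have : Q.IsPrime := Ultrafilter.isPrime_limIdeal fun s => s.2.1.1
  obtain ⟨P, hP, hPQ⟩ := Ideal.exists_minimalPrimes_le (Ultrafilter.le_limIdeal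
    (Filter.Eventually.of_forall fun s : I.minimalPrimes => s.2.1.2) : I ≤ Q)
  obtain ⟨F, hF, rfl⟩ := h P hP
  have hsingleton : ∀ᶠ s in U, s = (⟨_, hP⟩ : I.minimalPrimes) :=
    (Ultrafilter.eventually_radical_le_of_fg_of_radical_le_limIdeal
      (fun s => s.2.1.1.isRadical) hF hPQ).mono fun s hs =>
      Subtype.ext (le_antisymm (s.2.2 hP.1 hs) hs)
  exact (Set.finite_singleton _).notMem_hyperfilter hsingleton

/-- Let `R` be an integral domain and `I` a proper ideal of `R`.  If each prime ideal
minimal over `I` is the radical of a finitely generated ideal, then `I` has only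
finitely many minimal primes. -/
theorem minimalPrimes_finite_of_forall_radical_fg {R : Type*} [CommRing R] [IsDomain R]
    (I : Ideal R) (hI : I ≠ ⊤)
    (h : ∀ P ∈ I.minimalPrimes, ∃ F : Ideal R, F.FG ∧ P = F.radical) :
    I.minimalPrimes.Finite :=
  minimalPrimes_finite_of_forall_radical_fg_general I h
end

section
/- Let R be a commutative integral domain and let I be a t-ideal of R. If each minimal prime ideal of I is the radical of a t-finite ideal, then the set Min(I) of prime ideals minimal over I is finite. -/
variable {R K : Type*} [CommRing R] [IsDomain R] [Field K] [Algebra R K] [IsFractionRing R K]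

/-- `(R : E) = {x ∈ K | xE ⊆ R}`, for an `R`-submodule `E` of `K`. -/
def Submodule.dualSubmodule (E : Submodule R K) : Submodule R K where
  carrier := {x : K | ∀ y ∈ E, x * y ∈ (1 : Submodule R K)}
  add_mem' := by
    intro a b ha hb y hy
    rw [add_mul]
    exact add_mem (ha y hy) (hb y hy)
  zero_mem' := by
    intro y hy
    rw [zero_mul]
    exact zero_mem _
  smul_mem' := by
    intro c x hx y hy
    rw [smul_mul_assoc]
    exact Submodule.smul_mem _ c (hx y hy)

/-- The `v`-operation: `E^v = ((R : E) : R) = (E⁻¹)⁻¹`. -/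
def Submodule.vOp (E : Submodule R K) : Submodule R K :=
  E.dualSubmodule.dualSubmodule

/-- The `t`-operation, the finite type semistar operation associated to `v`:
`E^t` is the union of the `F^v` over the nonzero finitely generated
submodules `F ⊆ E`. -/
def Submodule.tOp (E : Submodule R K) : Submodule R K :=
  ⨆ F ∈ {F : Submodule R K | F.FG ∧ F ≠ ⊥ ∧ F ≤ E}, F.vOp

/-!
Minimal primes of a t-ideal `I` are again t-ideals: if `G ⊆ P ∈ Min(I)` is finitely
generated, some `s ∉ P` has `s G^n ⊆ I`, so `x ∈ G^v` gives
`s x^n ∈ (s G^n)^v ⊆ I^t = I ⊆ P`, whence `x ∈ P`.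
Hence, for `P ∈ Min(I)` with `√L_P = P` and `F_P^t = L_P^t`, a minimal prime `Q` contains
`F_P` iff it contains `L_P`, iff `Q = P`. Every prime over `I` contains some `F_P`; as the loci
`V(F_P)` are open and `V(I)` is compact in the constructible topology of `Spec R`, finitely
many `F_P` already suffice, and then `Min(I)` consists of the corresponding finitely many `P`.
-/

open IsLocalization

namespace Submodule

variable {R K : Type*} [CommRing R] [Field K] [Algebra R K]

theorem dualSubmodule_antitone {E F : Submodule R K} (h : E ≤ F) :
    F.dualSubmodule ≤ E.dualSubmodule :=
  fun _ hx y hy => hx y (h hy)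

theorem le_vOp (E : Submodule R K) : E ≤ E.vOp :=
  fun x hx y hy => mul_comm y x ▸ hy x hx

theorem dualSubmodule_one : (1 : Submodule R K).dualSubmodule = 1 :=
  le_antisymm (fun x hx => by simpa using hx 1 (one_le.mp le_rfl))
    (fun x hx y hy => by simpa using mul_mem_mul hx hy)

theorem vOp_le_one {E : Submodule R K} (h : E ≤ 1) : E.vOp ≤ 1 := by
  have h₁ : 1 ≤ E.dualSubmodule := dualSubmodule_one.ge.trans (dualSubmodule_antitone h)
  exact (dualSubmodule_antitone h₁).trans dualSubmodule_one.le

theorem mul_mem_vOp_mul {A B : Submodule R K} {x y : K} (hx : x ∈ A.vOp) (hy : y ∈ B.vOp) :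
    x * y ∈ (A * B).vOp := by
  intro z hz
  have hyz : y * z ∈ A.dualSubmodule := fun a ha => by
    have hza : z * a ∈ B.dualSubmodule := fun b hb => by
      simpa [mul_assoc] using hz _ (mul_mem_mul ha hb)
    simpa [mul_assoc] using hy _ hza
  simpa [mul_assoc] using hx _ hyz

theorem pow_mem_vOp_pow {A : Submodule R K} {x : K} (hx : x ∈ A.vOp) (n : ℕ) :
    x ^ n ∈ (A ^ n).vOp := by
  induction n with
  | zero => simpa using le_vOp 1 (one_le.mp le_rfl)
  | succ n ih => simpa only [pow_succ] using mul_mem_vOp_mul ih hx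

theorem vOp_le_tOp {F E : Submodule R K} (hF : F.FG) (hF₀ : F ≠ ⊥) (hFE : F ≤ E) :
    F.vOp ≤ E.tOp :=
  le_iSup₂_of_le F ⟨hF, hF₀, hFE⟩ le_rfl

theorem le_tOp (E : Submodule R K) : E ≤ E.tOp := by
  intro x hx
  rcases eq_or_ne x 0 with rfl | hx₀
  · exact zero_mem _
  · exact vOp_le_tOp (fg_span_singleton x) (by simpa using hx₀)
      (span_singleton_le_iff_mem _ _ |>.mpr hx) (le_vOp _ (mem_span_singleton_self x))

theorem tOp_mono {E E' : Submodule R K} (h : E ≤ E') : E.tOp ≤ E'.tOp :=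
  iSup₂_le fun _ ⟨hF, hF₀, hFE⟩ => vOp_le_tOp hF hF₀ (hFE.trans h)

end Submodule

section

variable {R : Type*} [CommRing R]

theorem Ideal.exists_mul_pow_mem_of_mem_minimalPrimes {I P : Ideal R} (hP : P ∈ I.minimalPrimes)
    {x : R} (hx : x ∈ P) : ∃ s ∉ P, ∃ n : ℕ, s * x ^ n ∈ I := by
  have := hP.isPrime
  have hx' : algebraMap R (Localization.AtPrime P) x ∈ (I.map (algebraMap R _)).radical := by
    rw [AtPrime.radical_map_of_mem_minimalPrimes _ P I hP]
    exact mem_map_of_mem _ hx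
  obtain ⟨n, hn⟩ := hx'
  rw [← map_pow, algebraMap_mem_map_algebraMap_iff P.primeCompl] at hn
  obtain ⟨s, hs, hsx⟩ := hn
  exact ⟨s, hs, n, hsx⟩

theorem Ideal.exists_span_singleton_mul_pow_le_of_mem_minimalPrimes {I P G : Ideal R}
    (hP : P ∈ I.minimalPrimes) (hG : G.FG) (hGP : G ≤ P) :
    ∃ s ∉ P, ∃ n : ℕ, span {s} * G ^ n ≤ I := by
  induction G, hG using Submodule.fg_induction with
  | singleton x =>
    obtain ⟨s, hs, n, hsx⟩ :=
      exists_mul_pow_mem_of_mem_minimalPrimes hP (hGP (Submodule.mem_span_singleton_self x))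
    refine ⟨s, hs, n, ?_⟩
    rwa [submodule_span_eq, span_singleton_pow, span_singleton_mul_span_singleton,
      span_singleton_le_iff_mem]
  | sup G₁ G₂ _ _ ih₁ ih₂ =>
    obtain ⟨s, hs, m, hm⟩ := ih₁ (le_sup_left.trans hGP)
    obtain ⟨t, ht, n, hn⟩ := ih₂ (le_sup_right.trans hGP)
    refine ⟨s * t, hP.isPrime.mul_notMem hs ht, m + n, ?_⟩
    calc span {s * t} * (G₁ ⊔ G₂) ^ (m + n)
        ≤ span {s * t} * (G₁ ^ m ⊔ G₂ ^ n) := mul_mono_right sup_pow_add_le_pow_sup_pow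
      _ = span {t} * (span {s} * G₁ ^ m) ⊔ span {s} * (span {t} * G₂ ^ n) := by
        rw [mul_sup, ← span_singleton_mul_span_singleton]
        ring_nf
      _ ≤ I := sup_le (mul_le_right.trans hm) (mul_le_right.trans hn)

theorem constructibleTopology_le {X : Type*} [TopologicalSpace X] [PrespectralSpace X] :
    constructibleTopology X ≤ ‹TopologicalSpace X› := by
  intro s hs
  obtain ⟨S, hS, rfl⟩ := PrespectralSpace.isTopologicalBasis.open_eq_sUnion hs
  exact @isOpen_sUnion _ (constructibleTopology X) _ fun U hU =>
    (hS hU).2.isOpen_constructibleTopology_of_isOpen (hS hU).1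

open PrimeSpectrum WithTopology in
theorem Ideal.exists_finset_forall_isPrime_le {ι : Type*} (I : Ideal R) (G : ι → Ideal R)
    (hG : ∀ i, (G i).FG) (h : ∀ Q : Ideal R, Q.IsPrime → I ≤ Q → ∃ i, G i ≤ Q) :
    ∃ T : Finset ι, ∀ Q : Ideal R, Q.IsPrime → I ≤ Q → ∃ i ∈ T, G i ≤ Q := by
  let X := WithConstructibleTopology (PrimeSpectrum R)
  have hopen (i : ι) : IsOpen (ofTopology ⁻¹' zeroLocus (G i) : Set X) :=
    IsCompact.isOpen_constructibleTopology_of_isClosed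
      (isCompact_isOpen_iff_ideal.mpr ⟨G i, hG i, rfl⟩).1 (isClosed_zeroLocus _)
  have hclosed : IsClosed (ofTopology ⁻¹' zeroLocus I : Set X) :=
    isClosed_iff _ |>.mpr <| (isClosed_zeroLocus (I : Set R)).mono constructibleTopology_le
  obtain ⟨T, hT⟩ := hclosed.isCompact.elim_finite_subcover _ hopen fun p hp =>
    Set.mem_iUnion.mpr (h _ (ofTopology p).isPrime hp)
  refine ⟨T, fun Q hQ hIQ => ?_⟩
  simpa using hT (show toTopology _ ⟨Q, hQ⟩ ∈ ofTopology ⁻¹' zeroLocus I from hIQ)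

end

section

variable {R S : Type*} [CommSemiring R] [CommSemiring S] [Algebra R S]

theorem IsLocalization.exists_coeSubmodule_eq_of_le_one {F : Submodule R S} (hF : F ≤ 1) :
    ∃ G : Ideal R, coeSubmodule S G = F :=
  ⟨F.comap (Algebra.linearMap R S), by
    rw [coeSubmodule, Submodule.map_comap_eq, ← Submodule.one_eq_range, inf_eq_right.mpr hF]⟩

theorem IsLocalization.coeSubmodule_le_one (I : Ideal R) : coeSubmodule S I ≤ 1 := by
  rw [← coeSubmodule_top]
  exact coeSubmodule_mono _ le_top

theorem IsLocalization.coeSubmodule_pow (I : Ideal R) (n : ℕ) :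
    coeSubmodule S (I ^ n) = coeSubmodule S I ^ n :=
  Submodule.map_pow I (Algebra.ofId R S) n

end

theorem IsFractionRing.algebraMap_mem_coeSubmodule_iff {R K : Type*} [CommRing R] [CommRing K]
    [Algebra R K] [IsFractionRing R K] {I : Ideal R} {x : R} :
    algebraMap R K x ∈ coeSubmodule K I ↔ x ∈ I := by
  rw [← Submodule.span_singleton_le_iff_mem, ← coeSubmodule_span_singleton,
    coeSubmodule_le_coeSubmodule, Ideal.span_singleton_le_iff_mem]

section

variable {R K : Type*} [CommRing R] [Field K] [Algebra R K]

variable (K) in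
def Ideal.IsTIdeal (I : Ideal R) : Prop :=
  (coeSubmodule K I).tOp = coeSubmodule K I

theorem Ideal.IsTIdeal.algebraMap_mul_pow_mem [IsDomain R] [IsFractionRing R K]
    {I G : Ideal R} (hI : I.IsTIdeal K) (hG : G.FG) (hG₀ : G ≠ ⊥) {s : R} (hs : s ≠ 0)
    {n : ℕ} (hsG : span {s} * G ^ n ≤ I) {x : K} (hx : x ∈ (coeSubmodule K G).vOp) :
    algebraMap R K s * x ^ n ∈ coeSubmodule K I := by
  have hsG₀ : coeSubmodule K (span {s} * G ^ n) ≠ ⊥ := by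
    rw [Ne, ← coeSubmodule_bot K, (IsFractionRing.coeSubmodule_injective R K).eq_iff,
      mul_eq_bot, span_singleton_eq_bot, not_or]
    exact ⟨hs, pow_ne_zero _ hG₀⟩
  have hsG_fg : (coeSubmodule K (span {s} * G ^ n)).FG :=
    (coeSubmodule_fg _ (IsFractionRing.injective R K) _).mpr
      ((Submodule.fg_span_singleton s).mul hG.pow)
  rw [← hI]
  refine Submodule.vOp_le_tOp hsG_fg hsG₀ (coeSubmodule_mono _ hsG) ?_
  rw [coeSubmodule_mul, coeSubmodule_pow, coeSubmodule_span_singleton]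
  exact Submodule.mul_mem_vOp_mul (Submodule.le_vOp _ (Submodule.mem_span_singleton_self _))
    (Submodule.pow_mem_vOp_pow hx n)

theorem Ideal.IsTIdeal.of_mem_minimalPrimes [IsDomain R] [IsFractionRing R K] {I P : Ideal R}
    (hI : I.IsTIdeal K) (hP : P ∈ I.minimalPrimes) : P.IsTIdeal K := by
  refine le_antisymm (iSup₂_le fun F ⟨hF, hF₀, hFP⟩ => ?_) (Submodule.le_tOp _)
  obtain ⟨G, rfl⟩ := exists_coeSubmodule_eq_of_le_one (hFP.trans (coeSubmodule_le_one _))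
  rw [coeSubmodule_fg _ (IsFractionRing.injective R K)] at hF
  rw [IsFractionRing.coeSubmodule_le_coeSubmodule] at hFP
  have hG₀ : G ≠ ⊥ := fun h => hF₀ (h ▸ coeSubmodule_bot K)
  obtain ⟨s, hs, n, hsG⟩ := exists_span_singleton_mul_pow_le_of_mem_minimalPrimes hP hF hFP
  intro x hx
  obtain ⟨r, rfl⟩ := Submodule.mem_one.mp (Submodule.vOp_le_one (coeSubmodule_le_one _) hx)
  have hsr := hI.algebraMap_mul_pow_mem hF hG₀ (by rintro rfl; exact hs P.zero_mem) hsG hx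
  rw [← map_pow, ← map_mul, IsFractionRing.algebraMap_mem_coeSubmodule_iff] at hsr
  rw [IsFractionRing.algebraMap_mem_coeSubmodule_iff]
  exact hP.isPrime.mem_of_pow_mem n ((hP.isPrime.mem_or_mem (hP.1.2 hsr)).resolve_left hs)

theorem Ideal.IsTIdeal.le_of_tOp_eq [IsFractionRing R K] {A B Q : Ideal R} (hQ : Q.IsTIdeal K)
    (hAB : (coeSubmodule K A).tOp = (coeSubmodule K B).tOp) (hBQ : B ≤ Q) : A ≤ Q := by
  rw [← IsFractionRing.coeSubmodule_le_coeSubmodule (K := K)]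
  calc coeSubmodule K A ≤ (coeSubmodule K A).tOp := Submodule.le_tOp _
    _ = (coeSubmodule K B).tOp := hAB
    _ ≤ (coeSubmodule K Q).tOp := Submodule.tOp_mono (coeSubmodule_mono _ hBQ)
    _ = coeSubmodule K Q := hQ

end

theorem minimalPrimes_finite_of_tIdeal_general (I : Ideal R)
    (ht : (Submodule.map (Algebra.linearMap R K) I).tOp = Submodule.map (Algebra.linearMap R K) I)
    (h : ∀ P ∈ I.minimalPrimes, ∃ L : Ideal R, L ≠ ⊥ ∧
      (∃ F : Ideal R, F.FG ∧ F ≠ ⊥ ∧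
        (Submodule.map (Algebra.linearMap R K) F).tOp =
          (Submodule.map (Algebra.linearMap R K) L).tOp) ∧
      P = L.radical) :
    I.minimalPrimes.Finite := by
  choose L _ hFL hPL using h
  choose F hF _ hFL using hFL
  have htP {P : Ideal R} (hP : P ∈ I.minimalPrimes) : P.IsTIdeal K :=
    Ideal.IsTIdeal.of_mem_minimalPrimes ht hP
  have hF_le {P : Ideal R} (hP : P ∈ I.minimalPrimes) : F P hP ≤ P :=
    (htP hP).le_of_tOp_eq (hFL P hP) (Ideal.le_radical.trans (hPL P hP).ge)
  obtain ⟨T, hT⟩ := Ideal.exists_finset_forall_isPrime_le I (fun P : I.minimalPrimes => F P P.2)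
    (fun P => hF P P.2) fun Q hQ hIQ => by
      obtain ⟨P, hP, hPQ⟩ := Ideal.exists_minimalPrimes_le (J := Q) hIQ
      exact ⟨⟨P, hP⟩, (hF_le hP).trans hPQ⟩
  refine (T.finite_toSet.image Subtype.val).subset fun Q hQ => ?_
  obtain ⟨⟨P, hP⟩, hPT, hFQ⟩ := hT Q hQ.isPrime hQ.1.2
  have hPQ : P ≤ Q := by
    rw [hPL P hP, ← hQ.isPrime.radical]
    exact Ideal.radical_mono ((htP hQ).le_of_tOp_eq (hFL P hP).symm hFQ)
  exact ⟨⟨P, hP⟩, hPT, le_antisymm hPQ (hQ.2 hP.1 hPQ)⟩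

/-- Let `I` be a `t`-ideal of the integral domain `R`.  If each minimal prime of `I`
is the radical of a `t`-finite ideal, then `Min(I)` is finite. -/
theorem minimalPrimes_finite_of_tIdeal (I : Ideal R) (hI : I ≠ ⊥)
    (ht : (Submodule.map (Algebra.linearMap R K) I).tOp = Submodule.map (Algebra.linearMap R K) I)
    (h : ∀ P ∈ I.minimalPrimes, ∃ L : Ideal R, L ≠ ⊥ ∧
      (∃ F : Ideal R, F.FG ∧ F ≠ ⊥ ∧
        (Submodule.map (Algebra.linearMap R K) F).tOp =
          (Submodule.map (Algebra.linearMap R K) L).tOp) ∧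
      P = L.radical) :
    I.minimalPrimes.Finite :=
  minimalPrimes_finite_of_tIdeal_general I ht h
end

section
/- Let R be a commutative integral domain with quotient field K, and suppose R has a Noetherian overring S (that is, R ⊆ S ⊆ K and S is a Noetherian ring). If I is an ideal of R such that IS ∩ R = I, then the set Min(I) of prime ideals of R minimal over I is finite. -/
/-! Every minimal prime of a contracted ideal `I = J ∩ R` is the contraction of a minimal prime
of `J`, and a Noetherian ring has only finitely many minimal primes over any ideal. -/

theorem Ideal.minimalPrimes_finite_of_comap_map_eq {R S : Type*} [CommRing R] [CommRing S]
    [IsNoetherianRing S] (f : R →+* S) {I : Ideal R} (h : (I.map f).comap f = I) :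
    I.minimalPrimes.Finite := by
  rw [← h]
  exact ((finite_minimalPrimes_of_isNoetherianRing S _).image _).subset
    (minimalPrimes_comap_subset f _)

theorem minimalPrimes_finite_of_noetherian_overring_general {R K : Type*} [CommRing R]
    [Field K] [Algebra R K]
    (S : Subalgebra R K) (hS : IsNoetherianRing S) (I : Ideal R)
    (h : (I.map (algebraMap R S)).comap (algebraMap R S) = I) :
    I.minimalPrimes.Finite :=
  have := hS
  Ideal.minimalPrimes_finite_of_comap_map_eq (algebraMap R S) h

/-- Suppose the integral domain `R` has a Noetherian overring `S`
(`R ⊆ S ⊆ K`, `K` the quotient field of `R`, `S` Noetherian).  If `I` is an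
ideal of `R` such that `IS ∩ R = I`, then `Min(I)` is finite. -/
theorem minimalPrimes_finite_of_noetherian_overring {R K : Type*} [CommRing R]
    [IsDomain R] [Field K] [Algebra R K] [IsFractionRing R K]
    (S : Subalgebra R K) (hS : IsNoetherianRing S) (I : Ideal R)
    (h : (I.map (algebraMap R S)).comap (algebraMap R S) = I) :
    I.minimalPrimes.Finite :=
  minimalPrimes_finite_of_noetherian_overring_general S hS I h
end

section
/- Let R be a commutative integral domain and let ⋆ be a semistar operation of finite type on R. Then R is a ⋆-SFT-ring if and only if each quasi-⋆-prime ideal of R is a ⋆-SFT-ideal. -/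
open Pointwise

/-!
Among the nonzero ideals that are not `⋆`-SFT, Zorn's lemma (via compactness of finitely generated
ideals) gives a maximal one `P`; it suffices to show that `P` is a quasi-`⋆`-prime.

`P` is prime: if `ab ∈ P` with `a, b ∉ P`, take SFT data `(B, n)` for `P + aR` and `(C, m)` for
`P + bR`; then `BC ⊆ (P + aR)(P + bR) ⊆ P` and `x ^ (n + m) ∈ B^⋆ C^⋆ ⊆ (BC)^⋆` for `x ∈ P^⋆`.

`P` is a quasi-`⋆`-ideal: otherwise `P ⊊ P^⋆ ∩ R`, which is therefore SFT with some finitely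
generated `J ⊆ P^⋆ ∩ R`. As `⋆` has finite type, the finitely many generators of `J` already lie in
`J'^⋆` for a finitely generated `J' ⊆ P`, so `J^⋆ ⊆ J'^⋆` and `J'` witnesses that `P` is SFT.
-/

section

variable {R K : Type*} [CommRing R] [Field K] [Algebra R K]

lemma Submodule.pointwise_smul_ne_bot {u : K} (hu : u ≠ 0) {E : Submodule R K} (hE : E ≠ ⊥) :
    u • E ≠ ⊥ := by
  obtain ⟨v, hv, hv0⟩ := (Submodule.ne_bot_iff E).1 hE
  exact (Submodule.ne_bot_iff _).2
    ⟨u • v, Submodule.smul_mem_pointwise_smul v u E hv, smul_ne_zero hu hv0⟩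

lemma Submodule.mul_ne_bot {E F : Submodule R K} (hE : E ≠ ⊥) (hF : F ≠ ⊥) : E * F ≠ ⊥ :=
  fun h => (Submodule.mul_eq_bot.1 h).elim hE hF

lemma Submodule.pointwise_smul_le_mul {E F : Submodule R K} {v : K} (hv : v ∈ F) :
    v • E ≤ E * F := by
  intro x hx
  obtain ⟨e, he, rfl⟩ := (Submodule.mem_smul_pointwise_iff_exists _ _ _).1 hx
  rw [smul_eq_mul, mul_comm v e]
  exact Submodule.mul_mem_mul he hv

lemma Ideal.map_linearMap_ne_bot [IsFractionRing R K] {I : Ideal R} (hI : I ≠ ⊥) :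
    Submodule.map (Algebra.linearMap R K) I ≠ ⊥ := by
  rwa [Ne, ← Submodule.map_bot (Algebra.linearMap R K),
    (Submodule.map_injective_of_injective (IsFractionRing.injective R K)).eq_iff]

end

lemma Ideal.sup_span_mul_sup_span_le {R : Type*} [CommRing R] {P : Ideal R} {a b : R}
    (hab : a * b ∈ P) : (P ⊔ Ideal.span {a}) * (P ⊔ Ideal.span {b}) ≤ P := by
  simp only [Ideal.sup_mul, Ideal.mul_sup, Ideal.span_singleton_mul_span_singleton, sup_le_iff]
  exact ⟨⟨Ideal.mul_le_right, Ideal.mul_le_right⟩, Ideal.mul_le_left,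
    (Ideal.span_singleton_le_iff_mem P).2 hab⟩

namespace SemistarOperation

open Submodule

variable {R K : Type*} [CommRing R] [IsDomain R] [Field K] [Algebra R K] [IsFractionRing R K]
variable (s : SemistarOperation R K)

section Star

variable {E F : Submodule R K}

lemma star_le_of_le_star (hE : E ≠ ⊥) (hF : F ≠ ⊥) (h : E ≤ s.star F) : s.star E ≤ s.star F :=
  (s.mono _ _ hE h).trans (s.star_star F hF).le

lemma mul_mem_star_mul_of_mem_right (hE : E ≠ ⊥) (hF : F ≠ ⊥) {u v : K} (hu : u ∈ s.star E)
    (hv : v ∈ F) : u * v ∈ s.star (E * F) := by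
  rcases eq_or_ne v 0 with rfl | hv0
  · simp
  have huv : u * v ∈ s.star (v • E) := by
    rw [s.smul_star v hv0 E hE, mul_comm]
    exact smul_mem_pointwise_smul u v _ hu
  exact s.star_le_of_le_star (pointwise_smul_ne_bot hv0 hE) (mul_ne_bot hE hF)
    ((pointwise_smul_le_mul hv).trans (s.le_star _ (mul_ne_bot hE hF))) huv

lemma mul_mem_star_mul (hE : E ≠ ⊥) (hF : F ≠ ⊥) {u v : K} (hu : u ∈ s.star E)
    (hv : v ∈ s.star F) : u * v ∈ s.star (E * F) := by
  rcases eq_or_ne u 0 with rfl | hu0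
  · simp
  have huv : u * v ∈ s.star (u • F) := by
    rw [s.smul_star u hu0 F hF]
    exact smul_mem_pointwise_smul v u _ hv
  refine s.star_le_of_le_star (pointwise_smul_ne_bot hu0 hF) (mul_ne_bot hE hF) ?_ huv
  intro x hx
  obtain ⟨f, hf, rfl⟩ := (mem_smul_pointwise_iff_exists _ _ _).1 hx
  exact s.mul_mem_star_mul_of_mem_right hE hF hu hf

end Star

section IdealStar

variable {I J P : Ideal R}

lemma idealStar_mono_s16 (hI : I ≠ ⊥) (hIJ : I ≤ J) : s.idealStar I ≤ s.idealStar J :=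
  s.mono _ _ (Ideal.map_linearMap_ne_bot hI) (map_mono hIJ)

lemma le_contract_s16 (hP : P ≠ ⊥) : P ≤ s.contract P :=
  fun x hx => s.le_star _ (Ideal.map_linearMap_ne_bot hP) ⟨x, hx, rfl⟩

lemma mul_mem_idealStar_mul (hI : I ≠ ⊥) (hJ : J ≠ ⊥) {u v : K} (hu : u ∈ s.idealStar I)
    (hv : v ∈ s.idealStar J) : u * v ∈ s.idealStar (I * J) := by
  have hmul : Submodule.map (Algebra.linearMap R K) (I * J) =
      Submodule.map (Algebra.linearMap R K) I * Submodule.map (Algebra.linearMap R K) J :=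
    Submodule.map_mul I J (Algebra.ofId R K)
  rw [idealStar, hmul]
  exact s.mul_mem_star_mul (Ideal.map_linearMap_ne_bot hI) (Ideal.map_linearMap_ne_bot hJ) hu hv

variable {s}

lemma exists_fg_le_of_mem_idealStar (hs : s.FiniteType) (hP : P ≠ ⊥) {x : K}
    (hx : x ∈ s.idealStar P) : ∃ J : Ideal R, J.FG ∧ J ≠ ⊥ ∧ J ≤ P ∧ x ∈ s.idealStar J := by
  obtain ⟨F, hFfg, hF0, hFP, hxF⟩ := (hs _ (Ideal.map_linearMap_ne_bot hP) x).1 hx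
  have hinj : Function.Injective (Algebra.linearMap R K) := IsFractionRing.injective R K
  have hF : Submodule.map (Algebra.linearMap R K) (F.comap (Algebra.linearMap R K)) = F :=
    map_comap_eq_of_le (hFP.trans LinearMap.map_le_range)
  refine ⟨F.comap (Algebra.linearMap R K), fg_of_fg_map_injective _ hinj (by rwa [hF]), ?_, ?_, ?_⟩
  · intro h
    rw [← hF, h, Submodule.map_bot] at hF0
    exact hF0 rfl
  · rw [← map_le_map_iff_of_injective hinj, hF]
    exact hFP
  · rwa [idealStar, hF]

lemma exists_fg_le_of_subset_idealStar (hs : s.FiniteType) (hP : P ≠ ⊥) (S : Finset K)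
    (hS : ↑S ⊆ (s.idealStar P : Set K)) :
    ∃ J : Ideal R, J.FG ∧ J ≠ ⊥ ∧ J ≤ P ∧ ↑S ⊆ (s.idealStar J : Set K) := by
  classical
  induction S using Finset.induction_on with
  | empty =>
    obtain ⟨p, hp, hp0⟩ := (Submodule.ne_bot_iff P).1 hP
    exact ⟨Ideal.span {p}, ⟨{p}, by simp⟩, by simpa using hp0,
      (Ideal.span_singleton_le_iff_mem P).2 hp, by simp⟩
  | insert x S _ ih =>
    rw [Finset.coe_insert, Set.insert_subset_iff] at hS
    obtain ⟨J, hJfg, hJ0, hJP, hSJ⟩ := ih hS.2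
    obtain ⟨Jx, hJxfg, hJx0, hJxP, hxJ⟩ := exists_fg_le_of_mem_idealStar hs hP hS.1
    refine ⟨Jx ⊔ J, Submodule.FG.sup hJxfg hJfg, fun h => hJ0 (le_bot_iff.1 (h ▸ le_sup_right)),
      sup_le hJxP hJP, ?_⟩
    rw [Finset.coe_insert]
    exact Set.insert_subset (s.idealStar_mono_s16 hJx0 le_sup_left hxJ)
      (hSJ.trans (s.idealStar_mono_s16 hJ0 le_sup_right))

lemma exists_fg_le_idealStar_le_of_le_contract (hs : s.FiniteType) (hP : P ≠ ⊥) (hJfg : J.FG)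
    (hJ : J ≠ ⊥) (hJP : J ≤ s.contract P) :
    ∃ J' : Ideal R, J'.FG ∧ J' ≤ P ∧ s.idealStar J ≤ s.idealStar J' := by
  classical
  obtain ⟨G, rfl⟩ := hJfg
  obtain ⟨J', hJ'fg, hJ'0, hJ'P, hGJ'⟩ := exists_fg_le_of_subset_idealStar hs hP
    (G.image (algebraMap R K)) (by
      rw [Finset.coe_image, Set.image_subset_iff]
      exact Ideal.subset_span.trans hJP)
  refine ⟨J', hJ'fg, hJ'P, s.star_le_of_le_star (Ideal.map_linearMap_ne_bot hJ)
    (Ideal.map_linearMap_ne_bot hJ'0) ?_⟩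
  rw [Finset.coe_image, Set.image_subset_iff] at hGJ'
  rw [Ideal.span, Submodule.map_span, span_le]
  rintro _ ⟨g, hg, rfl⟩
  exact hGJ' hg

end IdealStar

section SFT

variable {I P Q : Ideal R}

lemma isSFT_of_le (hP : P ≠ ⊥) (hPQ : P ≤ Q) {J : Ideal R} (hJ : J.FG) (hJP : J ≤ P) {k : ℕ}
    (hk : 0 < k) (h : ∀ a ∈ s.idealStar Q, a ^ k ∈ s.idealStar J) : s.IsSFT P :=
  ⟨hP, J, hJ, hJP, k, hk, fun a ha => h a (s.idealStar_mono_s16 hP hPQ ha)⟩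

lemma isSFT_top : s.IsSFT ⊤ :=
  ⟨top_ne_bot, ⊤, Ideal.fg_top R, le_rfl, 1, one_pos, by simp⟩

lemma not_isSFT_sSup {c : Set (Ideal R)} (hc : IsChain (· ≤ ·) c) (hcne : c.Nonempty)
    (h : ∀ I ∈ c, I ≠ ⊥ ∧ ¬ s.IsSFT I) : ¬ s.IsSFT (sSup c) := by
  rintro ⟨-, J, hJfg, hJc, k, hk, hJ⟩
  obtain ⟨I, hIc, hJI⟩ :=
    (CompleteLattice.isCompactElement_iff_le_of_directed_sSup_le (Ideal R) J).1
      ((fg_iff_compact J).1 hJfg) c hcne hc.directedOn hJc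
  exact (h I hIc).2 (s.isSFT_of_le (h I hIc).1 (le_sSup hIc) hJfg hJI hk hJ)

lemma exists_maximal_not_isSFT (hI : I ≠ ⊥) (hI' : ¬ s.IsSFT I) :
    ∃ P, I ≤ P ∧ Maximal (fun Q : Ideal R => Q ≠ ⊥ ∧ ¬ s.IsSFT Q) P :=
  zorn_le_nonempty₀ {Q : Ideal R | Q ≠ ⊥ ∧ ¬ s.IsSFT Q} (fun c hc hchain J hJ =>
    ⟨sSup c, ⟨fun h => (hc hJ).1 (le_bot_iff.1 (h ▸ le_sSup hJ)),
      s.not_isSFT_sSup hchain ⟨J, hJ⟩ hc⟩, fun _ => le_sSup⟩) I ⟨hI, hI'⟩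

lemma isSFT_of_mul_mem (hP : P ≠ ⊥) {a b : R} (hab : a * b ∈ P)
    (ha : s.IsSFT (P ⊔ Ideal.span {a})) (hb : s.IsSFT (P ⊔ Ideal.span {b})) : s.IsSFT P := by
  obtain ⟨-, B, hBfg, hBa, n, hn, hB⟩ := ha
  obtain ⟨-, C, hCfg, hCb, m, hm, hC⟩ := hb
  rcases eq_or_ne B ⊥ with rfl | hB0
  · exact s.isSFT_of_le hP le_sup_left fg_bot bot_le hn hB
  rcases eq_or_ne C ⊥ with rfl | hC0
  · exact s.isSFT_of_le hP le_sup_left fg_bot bot_le hm hC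
  have hBC : B * C ≤ P := (Ideal.mul_mono hBa hCb).trans (Ideal.sup_span_mul_sup_span_le hab)
  refine ⟨hP, B * C, hBfg.mul hCfg, hBC, n + m, by omega, fun x hx => ?_⟩
  rw [pow_add]
  exact s.mul_mem_idealStar_mul hB0 hC0 (hB x (s.idealStar_mono_s16 hP le_sup_left hx))
    (hC x (s.idealStar_mono_s16 hP le_sup_left hx))

variable {s}

lemma isSFT_of_isSFT_contract (hs : s.FiniteType) (hP : P ≠ ⊥) (h : s.IsSFT (s.contract P)) :
    s.IsSFT P := by
  obtain ⟨-, J, hJfg, hJP, k, hk, hJ⟩ := h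
  rcases eq_or_ne J ⊥ with rfl | hJ0
  · exact s.isSFT_of_le hP (s.le_contract_s16 hP) fg_bot bot_le hk hJ
  obtain ⟨J', hJ'fg, hJ'P, hJJ'⟩ := exists_fg_le_idealStar_le_of_le_contract hs hP hJfg hJ0 hJP
  exact s.isSFT_of_le hP (s.le_contract_s16 hP) hJ'fg hJ'P hk fun a ha => hJJ' (hJ a ha)

lemma isSFT_of_maximal_lt (hP : Maximal (fun Q : Ideal R => Q ≠ ⊥ ∧ ¬ s.IsSFT Q) P)
    (hPQ : P < Q) : s.IsSFT Q :=
  not_not.1 fun hQ => hP.not_prop_of_gt hPQ ⟨(bot_le.trans_lt hPQ).ne', hQ⟩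

lemma isPrime_of_maximal_not_isSFT (hP : Maximal (fun Q : Ideal R => Q ≠ ⊥ ∧ ¬ s.IsSFT Q) P) :
    P.IsPrime := by
  refine ⟨fun hP' => hP.1.2 (hP' ▸ s.isSFT_top), fun {a b} hab => ?_⟩
  by_contra! ⟨ha, hb⟩
  exact hP.1.2 (s.isSFT_of_mul_mem hP.1.1 hab (isSFT_of_maximal_lt hP (lt_sup_iff_notMem.2 ha))
    (isSFT_of_maximal_lt hP (lt_sup_iff_notMem.2 hb)))

lemma isQuasiStarIdeal_of_maximal_not_isSFT (hs : s.FiniteType)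
    (hP : Maximal (fun Q : Ideal R => Q ≠ ⊥ ∧ ¬ s.IsSFT Q) P) : s.IsQuasiStarIdeal P := by
  refine ⟨hP.1.1, ((s.le_contract_s16 hP.1.1).lt_or_eq.resolve_left fun hlt => ?_).symm⟩
  exact hP.1.2 (isSFT_of_isSFT_contract hs hP.1.1 (isSFT_of_maximal_lt hP hlt))

end SFT

end SemistarOperation

/-- Let `⋆` be a semistar operation of finite type on the integral domain `R`.  Then
`R` is a `⋆`-SFT-ring if and only if each quasi-`⋆`-prime ideal of `R` is a
`⋆`-SFT-ideal. -/
theorem isSFTRing_iff_quasiStarPrime_isSFT {R K : Type*} [CommRing R] [IsDomain R]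
    [Field K] [Algebra R K] [IsFractionRing R K] (s : SemistarOperation R K)
    (hs : s.FiniteType) :
    s.IsSFTRing ↔ ∀ P : Ideal R, P.IsPrime → s.IsQuasiStarIdeal P → s.IsSFT P := by
  refine ⟨fun h P _ hP => h P hP.1, fun h I hI => ?_⟩
  by_contra hI'
  obtain ⟨P, -, hP⟩ := s.exists_maximal_not_isSFT hI hI'
  exact hP.1.2 (h P (SemistarOperation.isPrime_of_maximal_not_isSFT hP)
    (SemistarOperation.isQuasiStarIdeal_of_maximal_not_isSFT hs hP))
end
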